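/- arXiv:0709.4332 — 2 statements merged into one kernel-verified Lean document; each statement's English description precedes it below -/
import Mathlib

section
/- Let δ > 0 and 0 ≤ ε ≤ (2√2/3)·δ. If x⁻, x⁺ ∈ Ω_ε and the midpoint (x⁻ + x⁺)/2 ∈ Ω_ε, then the entire straight-line segment with endpoints x⁻ and x⁺ lies in Ω_δ. -/
open MeasureTheory Real
/-- The parabolic strip `Ω_ε = {x : x₁² ≤ x₂ ≤ x₁² + ε²}`. -/
def Omega (ε : ℝ) : Set (ℝ × ℝ) := {x | x.1 ^ 2 ≤ x.2 ∧ x.2 ≤ x.1 ^ 2 + ε ^ 2}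

/-- The upper Bellman function `B⁺_δ`. -/
noncomputable def Bp (δ : ℝ) (x : ℝ × ℝ) : ℝ :=
  (1 - Real.sqrt (δ ^ 2 + x.1 ^ 2 - x.2)) / (1 - δ) *
    Real.exp (x.1 + Real.sqrt (δ ^ 2 + x.1 ^ 2 - x.2) - δ)

/-- The lower Bellman function `B⁻_δ`. -/
noncomputable def Bm (δ : ℝ) (x : ℝ × ℝ) : ℝ :=
  (1 + Real.sqrt (δ ^ 2 + x.1 ^ 2 - x.2)) / (1 + δ) *
    Real.exp (x.1 - Real.sqrt (δ ^ 2 + x.1 ^ 2 - x.2) + δ)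

/-!
The height `g(x) = x₂ - x₁²` of a point above the parabola is, along a segment, the linear
interpolation of its endpoint values plus the concave bump `t(1-t)(a-b)²`, where `a, b` are the
first coordinates of the endpoints. Membership of the midpoint in `Ω_ε` bounds the bump by
`(a-b)² ≤ 4ε² - 2g(x⁻) - 2g(x⁺)`, and the resulting quadratic in `t` has maximum `9ε²/8`,
attained at `t = 1/4` (or `3/4`). Since `ε² ≤ 8δ²/9`, this is at most `δ²`.
-/

def parabolaGap (x : ℝ × ℝ) : ℝ := x.2 - x.1 ^ 2

lemma mem_Omega_iff {ε : ℝ} {x : ℝ × ℝ} :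
    x ∈ Omega ε ↔ 0 ≤ parabolaGap x ∧ parabolaGap x ≤ ε ^ 2 := by
  simp only [Omega, parabolaGap, Set.mem_ofPred_eq, sub_nonneg, sub_le_iff_le_add']

lemma parabolaGap_lineMap (x y : ℝ × ℝ) (t : ℝ) :
    parabolaGap (AffineMap.lineMap x y t) =
      (1 - t) * parabolaGap x + t * parabolaGap y + t * (1 - t) * (x.1 - y.1) ^ 2 := by
  simp only [parabolaGap, AffineMap.lineMap_apply_module, Prod.fst_add, Prod.snd_add,
    Prod.smul_fst, Prod.smul_snd, smul_eq_mul]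
  ring

lemma parabolaGap_midpoint (x y : ℝ × ℝ) :
    parabolaGap ((1 / 2 : ℝ) • (x + y)) =
      (parabolaGap x + parabolaGap y) / 2 + (x.1 - y.1) ^ 2 / 4 := by
  simp only [parabolaGap, Prod.fst_add, Prod.snd_add, Prod.smul_fst, Prod.smul_snd, smul_eq_mul]
  ring

lemma interp_add_bump_le_of_le_half {u v s E t : ℝ} (hu0 : 0 ≤ u) (huE : u ≤ E) (hv0 : 0 ≤ v)
    (hmid : u + v + s / 2 ≤ 2 * E) (ht0 : 0 ≤ t) (ht : t ≤ 1 / 2) :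
    (1 - t) * u + t * v + t * (1 - t) * s ≤ 9 / 8 * E := by
  have hbump : t * (1 - t) * s ≤ t * (1 - t) * (4 * E - 2 * u - 2 * v) :=
    mul_le_mul_of_nonneg_left (by linarith) (mul_nonneg ht0 (by linarith))
  have hu : u * ((1 - t) * (1 - 2 * t)) ≤ E * ((1 - t) * (1 - 2 * t)) :=
    mul_le_mul_of_nonneg_right huE (mul_nonneg (by linarith) (by linarith))
  have hv : 0 ≤ v * (t * (1 - 2 * t)) := mul_nonneg hv0 (mul_nonneg ht0 (by linarith))
  -- `9/8 - (1 - t)(1 + 2t) = 2(t - 1/4)²`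
  have hmax : E * ((1 - t) * (1 + 2 * t)) ≤ 9 / 8 * E := by
    nlinarith [mul_nonneg (hu0.trans huE) (sq_nonneg (t - 1 / 4))]
  linarith

lemma interp_add_bump_le {u v s E t : ℝ} (hu0 : 0 ≤ u) (huE : u ≤ E) (hv0 : 0 ≤ v)
    (hvE : v ≤ E) (hmid : u + v + s / 2 ≤ 2 * E) (ht0 : 0 ≤ t) (ht1 : t ≤ 1) :
    (1 - t) * u + t * v + t * (1 - t) * s ≤ 9 / 8 * E := by
  rcases le_total t (1 / 2) with ht | ht
  · exact interp_add_bump_le_of_le_half hu0 huE hv0 hmid ht0 ht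
  · have := interp_add_bump_le_of_le_half (s := s) (t := 1 - t) hv0 hvE hu0 (by linarith)
      (by linarith) (by linarith)
    linarith [show (1 - (1 - t)) * v + (1 - t) * u + (1 - t) * (1 - (1 - t)) * s =
      (1 - t) * u + t * v + t * (1 - t) * s by ring]

theorem stmt13_general (δ ε : ℝ) (hε0 : 0 ≤ ε)
    (hε : ε ≤ (2 * Real.sqrt 2 / 3) * δ)
    (xm xp : ℝ × ℝ) (hm : xm ∈ Omega ε) (hp : xp ∈ Omega ε)
    (hmid : (1 / 2 : ℝ) • (xm + xp) ∈ Omega ε) :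
    segment ℝ xm xp ⊆ Omega δ := by
  have hεδ : 9 / 8 * ε ^ 2 ≤ δ ^ 2 := by
    have h2 : Real.sqrt 2 ^ 2 = 2 := Real.sq_sqrt zero_le_two
    nlinarith [pow_le_pow_left₀ hε0 hε 2]
  rw [segment_eq_image_lineMap]
  rintro _ ⟨t, ⟨ht0, ht1⟩, rfl⟩
  rw [mem_Omega_iff] at hm hp hmid ⊢
  rw [parabolaGap_midpoint] at hmid
  rw [parabolaGap_lineMap]
  constructor
  · have ht1' : 0 ≤ 1 - t := by linarith
    exact add_nonneg (add_nonneg (mul_nonneg ht1' hm.1) (mul_nonneg ht0 hp.1))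
      (mul_nonneg (mul_nonneg ht0 ht1') (sq_nonneg _))
  · refine le_trans (interp_add_bump_le hm.1 hm.2 hp.1 hp.2 ?_ ht0 ht1) hεδ
    linarith [hmid.2]

/-- If `ε ≤ (2√2/3)·δ` and a segment has both endpoints and its midpoint in
`Ω_ε`, then the whole segment lies in `Ω_δ`. -/
theorem stmt13 (δ ε : ℝ) (hδ : 0 < δ) (hε0 : 0 ≤ ε)
    (hε : ε ≤ (2 * Real.sqrt 2 / 3) * δ)
    (xm xp : ℝ × ℝ) (hm : xm ∈ Omega ε) (hp : xp ∈ Omega ε)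
    (hmid : (1 / 2 : ℝ) • (xm + xp) ∈ Omega ε) :
    segment ℝ xm xp ⊆ Omega δ :=
  stmt13_general δ ε hε0 hε xm xp hm hp hmid
end

section
/- For every ε with 0 < ε < √2·log 2, the equation g(δ, ε) = 0 has exactly one solution δ in the open interval (ε, 1). -/
open MeasureTheory Real
/-- The function `g(δ,ε)` whose root determines the sharp dyadic parameter `δ⁺(ε)`. -/
noncomputable def g (δ ε : ℝ) : ℝ :=
  (1 - Real.sqrt (δ ^ 2 - ε ^ 2)) * Real.exp (Real.sqrt (δ ^ 2 - ε ^ 2)) *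
      (2 - Real.exp (ε / Real.sqrt 2)) -
    (1 - δ) * Real.exp (δ - ε / Real.sqrt 2)

/-!
Existence is the intermediate value theorem on `[ε, 1]`: `g(1, ε) > 0` because
`e^{ε/√2} < 2`, while `g(ε, ε) < 0` because `x ↦ g(x, x)` vanishes at `0` and decreases,
its derivative being negative by `e^t > 1 + t` at `t = (√2 - 1) x`.

For uniqueness, write `s = √(δ² - ε²) ∈ (0, δ)`. Taking logarithms, `g(δ, ε) = 0` says
`L(δ) - L(s) = log (2 - e^{ε/√2}) + ε/√2` with `L(x) = log (1 - x) + x`. Since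
`L'(x) = -x/(1 - x)` and `ds/dδ = δ/s`, the left side has derivative
`δ/(1 - s) - δ/(1 - δ) < 0`, so it is strictly decreasing in `δ`.
-/

open Set

lemma sqrt_two_mul_log_two_lt_one : √2 * log 2 < 1 := by
  have hsqrt : √2 < 1.4143 := (Real.sqrt_lt' (by norm_num)).2 (by norm_num)
  nlinarith [Real.log_two_lt_d9, Real.log_pos one_lt_two]

lemma exp_div_sqrt_two_lt_two {ε : ℝ} (hε : ε < √2 * log 2) : exp (ε / √2) < 2 := by
  rw [← lt_log_iff_exp_lt two_pos, div_lt_iff₀ (by positivity), mul_comm]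
  exact hε

lemma continuous_g_left (ε : ℝ) : Continuous fun δ => g δ ε := by
  unfold g
  fun_prop

lemma g_one_pos {ε : ℝ} (hε : ε ≠ 0) (hexp : exp (ε / √2) < 2) : 0 < g 1 ε := by
  have hs : √(1 ^ 2 - ε ^ 2) < 1 :=
    (Real.sqrt_lt' one_pos).2 (by linarith [sq_pos_of_ne_zero hε])
  have : 0 < (1 - √(1 ^ 2 - ε ^ 2)) * exp √(1 ^ 2 - ε ^ 2) * (2 - exp (ε / √2)) :=
    mul_pos (mul_pos (by linarith) (exp_pos _)) (by linarith)
  simpa [g] using this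

lemma g_self (x : ℝ) : g x x = 2 - exp (x / √2) - (1 - x) * exp (x - x / √2) := by
  simp [g]

lemma hasDerivAt_g_self (x : ℝ) :
    HasDerivAt (fun x => g x x)
      (exp (x - x / √2) * (1 - (1 - x) * (1 - 1 / √2)) - exp (x / √2) / √2) x := by
  have hdiv : HasDerivAt (fun x : ℝ => x / √2) (1 / √2) x := (hasDerivAt_id' x).div_const _
  have hsub : HasDerivAt (fun x : ℝ => x - x / √2) (1 - 1 / √2) x := (hasDerivAt_id' x).sub hdiv
  rw [funext g_self]
  exact ((hdiv.exp.const_sub 2).fun_sub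
    (((hasDerivAt_id' x).const_sub 1).fun_mul hsub.exp)).congr_deriv (by ring)

lemma deriv_g_self_neg {x : ℝ} (hx : 0 < x) :
    exp (x - x / √2) * (1 - (1 - x) * (1 - 1 / √2)) - exp (x / √2) / √2 < 0 := by
  have hsq : √2 ^ 2 = 2 := Real.sq_sqrt zero_le_two
  have hsplit : exp (x / √2) = exp (x - x / √2) * exp ((√2 - 1) * x) := by
    rw [← exp_add]
    congr 1
    field_simp
    linear_combination -hsq
  have hlin : 1 - (1 - x) * (1 - 1 / √2) = ((√2 - 1) * x + 1) / √2 := by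
    field_simp
    ring
  have hgrowth : (√2 - 1) * x + 1 < exp ((√2 - 1) * x) :=
    add_one_lt_exp (mul_pos (sub_pos.2 one_lt_sqrt_two) hx).ne'
  rw [hsplit, hlin, sub_neg, mul_div_assoc]
  gcongr

lemma g_self_neg {ε : ℝ} (hε : 0 < ε) : g ε ε < 0 := by
  have hanti : StrictAntiOn (fun x => g x x) (Ici 0) := by
    refine strictAntiOn_of_deriv_neg (convex_Ici 0)
      (fun x _ => (hasDerivAt_g_self x).continuousAt.continuousWithinAt) fun x hx => ?_
    rw [interior_Ici] at hx
    rw [(hasDerivAt_g_self x).deriv]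
    exact deriv_g_self_neg hx
  have h0 : g 0 0 = 0 := by norm_num [g_self]
  simpa [h0] using hanti (mem_Ici.2 le_rfl) hε.le hε

noncomputable def logOneSubAdd (x : ℝ) : ℝ := log (1 - x) + x

noncomputable def logOneSubAddGap (ε δ : ℝ) : ℝ := logOneSubAdd δ - logOneSubAdd √(δ ^ 2 - ε ^ 2)

lemma hasDerivAt_logOneSubAdd {x : ℝ} (hx : x ≠ 1) :
    HasDerivAt logOneSubAdd (-x / (1 - x)) x := by
  have hx' : 1 - x ≠ 0 := sub_ne_zero.2 hx.symm
  refine ((((hasDerivAt_id' x).const_sub 1).log hx').fun_add (hasDerivAt_id' x)).congr_deriv ?_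
  field_simp
  ring

lemma hasDerivAt_sqrt_sq_sub_sq {ε δ : ℝ} (h : ε ^ 2 < δ ^ 2) :
    HasDerivAt (fun x => √(x ^ 2 - ε ^ 2)) (δ / √(δ ^ 2 - ε ^ 2)) δ := by
  refine (((hasDerivAt_pow 2 δ).sub_const (ε ^ 2)).sqrt (sub_pos.2 h).ne').congr_deriv ?_
  field_simp
  norm_num

lemma sqrt_sq_sub_sq_mem_Ioo {ε δ : ℝ} (hε : 0 < ε) (h : ε < δ) :
    √(δ ^ 2 - ε ^ 2) ∈ Ioo 0 δ :=
  ⟨Real.sqrt_pos.2 (by nlinarith), (Real.sqrt_lt' (hε.trans h)).2 (by nlinarith)⟩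

lemma strictAntiOn_logOneSubAddGap {ε : ℝ} (hε : 0 < ε) :
    StrictAntiOn (logOneSubAddGap ε) (Ioo ε 1) := by
  have hderiv : ∀ δ ∈ Ioo ε 1, HasDerivAt (logOneSubAddGap ε)
      (-δ / (1 - δ) - -√(δ ^ 2 - ε ^ 2) / (1 - √(δ ^ 2 - ε ^ 2)) *
        (δ / √(δ ^ 2 - ε ^ 2))) δ := by
    rintro δ ⟨hεδ, hδ1⟩
    obtain ⟨-, hsδ⟩ := sqrt_sq_sub_sq_mem_Ioo hε hεδ
    have hcomp := (hasDerivAt_logOneSubAdd (hsδ.trans hδ1).ne).comp δ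
      (hasDerivAt_sqrt_sq_sub_sq (ε := ε) (δ := δ) (by nlinarith))
    exact (hasDerivAt_logOneSubAdd hδ1.ne).sub hcomp
  refine strictAntiOn_of_deriv_neg (convex_Ioo ε 1)
    (fun δ hδ => (hderiv δ hδ).continuousAt.continuousWithinAt) fun δ hδ => ?_
  rw [interior_Ioo] at hδ
  obtain ⟨hεδ, hδ1⟩ := hδ
  obtain ⟨hs0, hsδ⟩ := sqrt_sq_sub_sq_mem_Ioo hε hεδ
  set s := √(δ ^ 2 - ε ^ 2)
  have h1s : 0 < 1 - s := by linarith
  have h1δ : 0 < 1 - δ := by linarith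
  have hform : -δ / (1 - δ) - -s / (1 - s) * (δ / s) = δ * (s - δ) / ((1 - s) * (1 - δ)) := by
    field_simp
    ring
  rw [(hderiv δ ⟨hεδ, hδ1⟩).deriv, hform]
  exact div_neg_of_neg_of_pos (mul_neg_of_pos_of_neg (hε.trans hεδ) (by linarith))
    (mul_pos h1s h1δ)

lemma logOneSubAddGap_eq_of_g_eq_zero {ε δ : ℝ} (hδ0 : 0 ≤ δ) (hδ1 : δ < 1)
    (hexp : exp (ε / √2) < 2) (h : g δ ε = 0) :
    logOneSubAddGap ε δ = log (2 - exp (ε / √2)) + ε / √2 := by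
  set s := √(δ ^ 2 - ε ^ 2) with hs
  have hsδ : s ≤ δ := by
    calc s ≤ √(δ ^ 2) := Real.sqrt_le_sqrt (by nlinarith)
      _ = δ := Real.sqrt_sq hδ0
  have h1s : 0 < 1 - s := by linarith
  have h1δ : 0 < 1 - δ := by linarith
  have hlog := congrArg log (sub_eq_zero.1 h)
  rw [← hs, log_mul (by positivity) (by linarith), log_mul h1s.ne' (exp_ne_zero _),
    log_mul h1δ.ne' (exp_ne_zero _), log_exp, log_exp] at hlog
  unfold logOneSubAddGap logOneSubAdd
  linarith

/-- For `0 < ε < √2 log 2`, the equation `g(δ,ε) = 0` has exactly one solution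
`δ` in `(ε, 1)`. -/
theorem stmt16 (ε : ℝ) (hε0 : 0 < ε) (hε1 : ε < Real.sqrt 2 * Real.log 2) :
    ∃! δ : ℝ, δ ∈ Set.Ioo ε 1 ∧ g δ ε = 0 := by
  have hε1' : ε < 1 := hε1.trans sqrt_two_mul_log_two_lt_one
  have hexp := exp_div_sqrt_two_lt_two hε1
  obtain ⟨δ, hδ, hgδ⟩ := intermediate_value_Ioo hε1'.le (continuous_g_left ε).continuousOn
    ⟨g_self_neg hε0, g_one_pos hε0.ne' hexp⟩
  have hroot : ∀ y ∈ Ioo ε 1, g y ε = 0 →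
      logOneSubAddGap ε y = log (2 - exp (ε / √2)) + ε / √2 :=
    fun y hy => logOneSubAddGap_eq_of_g_eq_zero (hε0.trans hy.1).le hy.2 hexp
  refine ⟨δ, ⟨hδ, hgδ⟩, fun y ⟨hy, hgy⟩ => (strictAntiOn_logOneSubAddGap hε0).injOn hy hδ ?_⟩
  rw [hroot y hy hgy, hroot δ hδ hgδ]
end
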